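/- arXiv:2108.06374 — 3 statements merged into one kernel-verified Lean document; each statement's English description precedes it below -/
import Mathlib

section
/- Let σ > 0 and let ρ : [0,∞) → ℝ be continuously differentiable with ρ(0) = 1. Suppose that for every h ≥ 0 the function t ↦ σ²·ρ(t)·ρ(t+h) + ∫₀ᵗ ρ(u)ρ(u+h) du is constant on [0,∞). Then ρ(t) = exp(−t/(2σ²)) for all t ≥ 0; equivalently, ρ(t) = e^{−θt} with θ = 1/(2σ²), so that σ² = 1/(2θ). -/
/-!
At lag `h = 0` the stationarity identity says that `y t = σ² - ∫₀ᵗ ρ²` equals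
`σ² ρ(t)²`, so `y' = -ρ² = -y/σ²` and hence `ρ(t)² = e^{-t/σ²}`. Being continuous,
nowhere zero and equal to `1` at `0`, `ρ` is positive, so `ρ(t) = e^{-t/(2σ²)}`.
-/

open MeasureTheory Set

theorem IsPreconnected.pos_of_forall_ne_zero {X : Type*} [TopologicalSpace X] {s : Set X}
    {f : X → ℝ} {a x : X} (hs : IsPreconnected s) (hf : ContinuousOn f s)
    (hne : ∀ y ∈ s, f y ≠ 0) (ha : a ∈ s) (hfa : 0 < f a) (hx : x ∈ s) : 0 < f x := by
  by_contra! hfx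
  obtain ⟨y, hy, hfy⟩ := hs.intermediate_value hx ha hf ⟨hfx, hfa.le⟩
  exact hne y hy hfy

theorem ContinuousOn.integral_hasDerivWithinAt_Ici {E : Type*} [NormedAddCommGroup E]
    [NormedSpace ℝ E] [CompleteSpace E] {f : ℝ → E} {a x : ℝ}
    (hf : ContinuousOn f (Ici a)) (hx : a ≤ x) :
    HasDerivWithinAt (fun u => ∫ t in a..u, f t) (f x) (Ici x) x := by
  have hfx : ContinuousOn f (Ici x) := hf.mono (Ici_subset_Ici.mpr hx)
  exact intervalIntegral.integral_hasDerivWithinAt_right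
    ((hf.mono Icc_subset_Ici_self).intervalIntegrable_of_Icc hx)
    ((hfx.mono Ioi_subset_Ici_self).stronglyMeasurableAtFilter_nhdsWithin measurableSet_Ioi x)
    ((hfx x self_mem_Ici).mono Ioi_subset_Ici_self)

theorem eq_mul_exp_of_hasDerivWithinAt_Ici {f : ℝ → ℝ} {a c t : ℝ}
    (hcont : ContinuousOn f (Ici a))
    (hderiv : ∀ x ∈ Ici a, HasDerivWithinAt f (c * f x) (Ici x) x) (ht : a ≤ t) :
    f t = f a * Real.exp (c * (t - a)) := by
  set g : ℝ → ℝ := fun x => f x * Real.exp (-(c * (x - a)))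
  have hg : ∀ x ∈ Ico a t, HasDerivWithinAt g 0 (Ici x) x := by
    intro x hx
    have hexp : HasDerivWithinAt (fun x => Real.exp (-(c * (x - a))))
        (Real.exp (-(c * (x - a))) * -c) (Ici x) x := by
      simpa using (((hasDerivWithinAt_id x _).sub_const a).const_mul c).neg.exp
    exact ((hderiv x hx.1).mul hexp).congr_deriv (by ring)
  have hgcont : ContinuousOn g (Icc a t) :=
    (hcont.mono Icc_subset_Ici_self).mul (by fun_prop)
  have hgt := constant_of_has_deriv_right_zero hgcont hg t ⟨ht, le_rfl⟩
  simp only [g, sub_self, mul_zero, neg_zero, Real.exp_zero, mul_one] at hgt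
  rw [← hgt, mul_assoc, ← Real.exp_add]
  simp

/-- Necessity direction of Theorem 2.2 (at the covariance level): if the covariance
`σ²·ρ(t)·ρ(t+h) + ∫₀ᵗ ρ(u)ρ(u+h) du` does not depend on `t` (for every `h ≥ 0`),
then the memory kernel is `ρ t = exp (-t/(2σ²))`. -/
theorem stmt_1 (σ : ℝ) (hσ : 0 < σ) (ρ : ℝ → ℝ)
    (hreg : ContDiffOn ℝ 1 ρ (Set.Ici 0)) (hρ0 : ρ 0 = 1)
    (hconst : ∀ h : ℝ, 0 ≤ h → ∀ t₁ t₂ : ℝ, 0 ≤ t₁ → 0 ≤ t₂ →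
      σ ^ 2 * ρ t₁ * ρ (t₁ + h) + (∫ u in (0:ℝ)..t₁, ρ u * ρ (u + h)) =
        σ ^ 2 * ρ t₂ * ρ (t₂ + h) + (∫ u in (0:ℝ)..t₂, ρ u * ρ (u + h))) :
    ∀ t : ℝ, 0 ≤ t → ρ t = Real.exp (-t / (2 * σ ^ 2)) := by
  have hσ2 : σ ^ 2 ≠ 0 := by positivity
  have hρ2 : ContinuousOn (fun u => ρ u ^ 2) (Ici 0) := hreg.continuousOn.pow 2
  set y : ℝ → ℝ := fun s => σ ^ 2 - ∫ u in (0:ℝ)..s, ρ u ^ 2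
  have hy : EqOn y (fun s => σ ^ 2 * ρ s ^ 2) (Ici 0) := fun s hs => by
    have lag_zero := hconst 0 le_rfl s 0 hs le_rfl
    simp only [add_zero, intervalIntegral.integral_same, hρ0, mul_one, ← sq] at lag_zero
    simp only [y]
    linarith
  have hy' : ∀ x ∈ Ici (0:ℝ), HasDerivWithinAt y (-(σ ^ 2)⁻¹ * y x) (Ici x) x :=
    fun x hx =>
      ((hρ2.integral_hasDerivWithinAt_Ici hx).const_sub (σ ^ 2)).congr_deriv
        (by rw [hy hx]; field_simp)
  have hsq : ∀ s ≥ 0, ρ s ^ 2 = Real.exp (-s / (2 * σ ^ 2)) ^ 2 := fun s hs => by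
    have hys := eq_mul_exp_of_hasDerivWithinAt_Ici ((continuousOn_const.mul hρ2).congr hy) hy' hs
    rw [hy hs, hy self_mem_Ici] at hys
    simp only [hρ0, one_pow, mul_one, sub_zero] at hys
    rw [← Real.exp_nat_mul, mul_left_cancel₀ hσ2 hys]
    congr 1
    field_simp
    norm_num
  have hpos : ∀ s ≥ 0, 0 < ρ s := fun s hs =>
    isPreconnected_Ici.pos_of_forall_ne_zero hreg.continuousOn
      (fun x hx hρx => (pow_pos (Real.exp_pos _) 2).ne
        (by rw [← hsq x hx, hρx, zero_pow two_ne_zero]))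
      self_mem_Ici (hρ0 ▸ one_pos) hs
  intro t ht
  exact (sq_eq_sq₀ (hpos t ht).le (Real.exp_pos _).le).mp (hsq t ht)
end

section
/- Let σ > 0 and let ρ : [0,∞) → ℝ be continuous with ρ(0) = 1 and ρ(t) ≠ 0 for all t ≥ 0. Define γ(t, t+h) = σ²·ρ(t)·ρ(t+h) + ∫₀ᵗ ρ(u)ρ(u+h) du for t, h ≥ 0. If γ(0, t+h)·γ(t, t) = γ(0, t)·γ(t, t+h) for all t, h ≥ 0, then ρ satisfies the exponential Cauchy equation ρ(t+h) = ρ(t)ρ(h) for all t, h ≥ 0, and consequently there exists c ∈ ℝ such that ρ(t) = e^{ct} for all t ≥ 0. -/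
/-!
Putting `t = 0` in the covariance formula gives `γ(0, s) = σ²ρ(s)`, and the Markov identity
reduces to `ρ(s+h)·A(s) = ρ(s)·C(s)` with `A(s) = ∫₀ˢ ρ²` and `C(s) = ∫₀ˢ ρ(u)ρ(u+h) du`.
Hence `(C/A)' = ρ(ρ(·+h)A - ρC)/A² = 0`, so `ρ(s+h)/ρ(s) = C(s)/A(s)` is constant in `s`;
letting `s → 0` identifies the constant as `ρ(h)`. The continuous solutions of the resulting
Cauchy equation are positive, and `log ρ` is additive, hence linear.
-/

open Set intervalIntegral NNReal

lemma eq_mul_of_map_add_of_continuousOn_Ici {g : ℝ → ℝ} (hg : ContinuousOn g (Ici 0))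
    (hadd : ∀ a, 0 ≤ a → ∀ b, 0 ≤ b → g (a + b) = g a + g b) {t : ℝ} (ht : 0 ≤ t) :
    g t = g 1 * t := by
  let G : ℝ≥0 →+ ℝ := AddMonoidHom.mk' (fun x => g x) fun x y => hadd x x.2 y y.2
  have hrat (q : ℚ) : g |(q : ℝ)| = g 1 * |(q : ℝ)| := by
    have : g (q.nnabs : ℝ) = (q.nnabs : ℝ) * g 1 := by
      have := map_nnratCast_smul G ℝ≥0 ℝ q.nnabs 1
      rwa [smul_eq_mul, mul_one, smul_eq_mul] at this
    rwa [← Rat.cast_nnratCast, Rat.coe_nnabs, Rat.cast_abs, mul_comm] at this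
  -- precomposing with `|·|` makes both sides continuous on all of `ℝ`, where `ℚ` is dense
  have habs : (fun x : ℝ => g |x|) = fun x => g 1 * |x| :=
    Rat.denseRange_cast.equalizer (hg.comp_continuous continuous_abs abs_nonneg) (by fun_prop)
      (funext hrat)
  simpa [abs_of_nonneg ht] using congrFun habs t

lemma exists_eq_exp_of_map_add_eq_mul {ρ : ℝ → ℝ} (hρ : ContinuousOn ρ (Ici 0))
    (hne : ∀ t, 0 ≤ t → ρ t ≠ 0) (hmul : ∀ t, 0 ≤ t → ∀ h, 0 ≤ h → ρ (t + h) = ρ t * ρ h) :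
    ∃ c : ℝ, ∀ t, 0 ≤ t → ρ t = Real.exp (c * t) := by
  have hpos (t : ℝ) (ht : 0 ≤ t) : 0 < ρ t := by
    have hsq : ρ t = ρ (t / 2) * ρ (t / 2) := by
      simpa using hmul (t / 2) (by positivity) (t / 2) (by positivity)
    exact hsq ▸ mul_self_pos.2 (hne _ (by positivity))
  have hlog (t : ℝ) (ht : 0 ≤ t) : Real.log (ρ t) = Real.log (ρ 1) * t :=
    eq_mul_of_map_add_of_continuousOn_Ici (hρ.log hne)
      (fun a ha b hb => by rw [hmul a ha b hb, Real.log_mul (hne a ha) (hne b hb)]) ht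
  exact ⟨Real.log (ρ 1), fun t ht => by rw [← hlog t ht, Real.exp_log (hpos t ht)]⟩

lemma hasDerivAt_integral_of_continuousOn_Ici {f : ℝ → ℝ} (hf : ContinuousOn f (Ici 0))
    {s : ℝ} (hs : 0 < s) : HasDerivAt (fun t => ∫ u in 0..t, f u) (f s) s :=
  integral_hasDerivAt_right (hf.mono Icc_subset_Ici_self |>.intervalIntegrable_of_Icc hs.le)
    ((hf.mono Ioi_subset_Ici_self).stronglyMeasurableAtFilter isOpen_Ioi s hs)
    (hf.continuousAt (Ici_mem_nhds hs))

lemma div_eq_div_zero_of_mul_integral_eq {ρ ψ : ℝ → ℝ} (hρ : ContinuousOn ρ (Ici 0))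
    (hψ : ContinuousOn ψ (Ici 0)) (hne : ∀ t, 0 ≤ t → ρ t ≠ 0)
    (h : ∀ s, 0 < s → ψ s * ∫ u in 0..s, ρ u * ρ u = ρ s * ∫ u in 0..s, ρ u * ψ u)
    {s : ℝ} (hs : 0 ≤ s) : ψ s / ρ s = ψ 0 / ρ 0 := by
  set A := fun t => ∫ u in 0..t, ρ u * ρ u
  set C := fun t => ∫ u in 0..t, ρ u * ψ u
  have hA_pos (t : ℝ) (ht : 0 < t) : 0 < A t :=
    intervalIntegral_pos_of_pos_on
      ((hρ.mul hρ).mono Icc_subset_Ici_self |>.intervalIntegrable_of_Icc ht.le)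
      (fun u hu => mul_self_pos.2 (hne u hu.1.le)) ht
  have hratio : EqOn (fun t => ψ t / ρ t) (fun t => C t / A t) (Ioi 0) := fun t ht => by
    rw [div_eq_div_iff (hne t ht.le) (hA_pos t ht).ne']
    linear_combination h t ht
  -- `(C / A)' = ρ (ψ A - ρ C) / A² = 0`
  have hderiv (t : ℝ) (ht : 0 < t) : HasDerivAt (fun t => C t / A t) 0 t := by
    have hC := hasDerivAt_integral_of_continuousOn_Ici (f := fun u => ρ u * ψ u) (hρ.mul hψ) ht
    have hA := hasDerivAt_integral_of_continuousOn_Ici (f := fun u => ρ u * ρ u) (hρ.mul hρ) ht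
    refine (hC.div hA (hA_pos t ht).ne').congr_deriv ?_
    rw [div_eq_zero_iff]
    left
    linear_combination ρ t * h t ht
  obtain ⟨k, hk⟩ := isOpen_Ioi.exists_is_const_of_deriv_eq_zero isPreconnected_Ioi
    (fun t ht => (hderiv t ht).differentiableAt.differentiableWithinAt)
    (fun t ht => (hderiv t ht).deriv)
  have hconst : EqOn (fun t => ψ t / ρ t) (fun _ => k) (Ici 0) :=
    EqOn.of_subset_closure (fun t ht => (hratio ht).trans (hk t ht)) (hψ.div hρ hne)
      continuousOn_const Ioi_subset_Ici_self (closure_Ioi (0 : ℝ)).ge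
  exact (hconst hs).trans (hconst self_mem_Ici).symm

lemma mul_integral_eq_of_markov {σ : ℝ} (hσ : σ ≠ 0) {ρ : ℝ → ℝ} (hρ0 : ρ 0 = 1)
    {γ : ℝ → ℝ → ℝ}
    (hγ : ∀ t : ℝ, 0 ≤ t → ∀ h : ℝ, 0 ≤ h →
      γ t (t + h) = σ ^ 2 * ρ t * ρ (t + h) + ∫ u in (0:ℝ)..t, ρ u * ρ (u + h))
    (hmarkov : ∀ t : ℝ, 0 ≤ t → ∀ h : ℝ, 0 ≤ h →
      γ 0 (t + h) * γ t t = γ 0 t * γ t (t + h))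
    {s h : ℝ} (hs : 0 ≤ s) (hh : 0 ≤ h) :
    ρ (s + h) * ∫ u in 0..s, ρ u * ρ u = ρ s * ∫ u in 0..s, ρ u * ρ (u + h) := by
  have hγ0 (t : ℝ) (ht : 0 ≤ t) : γ 0 t = σ ^ 2 * ρ t := by
    simpa [hρ0] using hγ 0 le_rfl t ht
  have hγdiag : γ s s = σ ^ 2 * ρ s * ρ s + ∫ u in 0..s, ρ u * ρ u := by
    simpa using hγ s hs 0 le_rfl
  have hm := hmarkov s hs h hh
  rw [hγ0 _ (add_nonneg hs hh), hγ0 s hs, hγdiag, hγ s hs h hh] at hm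
  exact mul_left_cancel₀ (pow_ne_zero 2 hσ) (by linear_combination hm)

/-- Necessity direction of Theorem 2.3 (at the covariance level): if the covariance
`γ(t,t+h) = σ²ρ(t)ρ(t+h) + ∫₀ᵗ ρ(u)ρ(u+h) du` satisfies the Markov identity
`γ(0,t+h)·γ(t,t) = γ(0,t)·γ(t,t+h)`, then `ρ` satisfies the exponential Cauchy
equation and hence `ρ t = exp (c t)` for some real `c`. -/
theorem stmt_2 (σ : ℝ) (hσ : 0 < σ) (ρ : ℝ → ℝ)
    (hcont : ContinuousOn ρ (Set.Ici 0)) (hρ0 : ρ 0 = 1)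
    (hne : ∀ t : ℝ, 0 ≤ t → ρ t ≠ 0)
    (γ : ℝ → ℝ → ℝ)
    (hγ : ∀ t : ℝ, 0 ≤ t → ∀ h : ℝ, 0 ≤ h →
      γ t (t + h) = σ ^ 2 * ρ t * ρ (t + h) + ∫ u in (0:ℝ)..t, ρ u * ρ (u + h))
    (hmarkov : ∀ t : ℝ, 0 ≤ t → ∀ h : ℝ, 0 ≤ h →
      γ 0 (t + h) * γ t t = γ 0 t * γ t (t + h)) :
    (∀ t : ℝ, 0 ≤ t → ∀ h : ℝ, 0 ≤ h → ρ (t + h) = ρ t * ρ h) ∧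
      ∃ c : ℝ, ∀ t : ℝ, 0 ≤ t → ρ t = Real.exp (c * t) := by
  have hcauchy (t : ℝ) (ht : 0 ≤ t) (h : ℝ) (hh : 0 ≤ h) : ρ (t + h) = ρ t * ρ h := by
    have hshift : ContinuousOn (fun u => ρ (u + h)) (Ici 0) :=
      hcont.comp (continuousOn_id.add continuousOn_const) fun u hu => add_nonneg hu hh
    have hratio := div_eq_div_zero_of_mul_integral_eq hcont hshift hne
      (fun s hs => mul_integral_eq_of_markov hσ.ne' hρ0 hγ hmarkov hs.le hh) ht
    rw [zero_add, hρ0, div_one, div_eq_iff (hne t ht)] at hratio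
    rw [hratio, mul_comm]
  exact ⟨hcauchy, exists_eq_exp_of_map_add_eq_mul hcont hne hcauchy⟩
end

section
/- Let G ≥ 0, β ∈ ℝ, v₀ ∈ ℝ, t > 0, let τ be a finite Borel measure on ℝ with τ({0}) = 0, and let ρ : [0,t] → ℝ be continuous with ρ(s) ≠ 0 for all s ∈ [0,t]. Let D = {x ∈ ℝ : |x| ≤ 1} and define the characteristic exponent ψ(z) = −(1/2)G·z² + iβz + ∫_ℝ (e^{izy} − 1 − izy·1_D(y)) τ(dy) for z ∈ ℝ. Define ν_t on Borel sets B by ν_t(B) = ∫_ℝ ( ∫₀ᵗ 1_B(y·ρ(t−s)) ds ) τ(dy), and set A_t = G·∫₀ᵗ ρ(t−s)² ds and γ_{t,v₀} = ρ(t)·v₀ + β·∫₀ᵗ ρ(t−s) ds + ∫_ℝ ( ∫₀ᵗ y·ρ(t−s)·[1_D(y·ρ(t−s)) − 1_D(y)] ds ) τ(dy). Then for every z ∈ ℝ, iz·ρ(t)·v₀ + ∫₀ᵗ ψ(z·ρ(t−s)) ds = −(1/2)A_t·z² + i·γ_{t,v₀}·z + ∫_ℝ (e^{izx} − 1 − izx·1_D(x))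 ν_t(dx). -/
open MeasureTheory ENNReal

/-- Indicator (as a real-valued function) of the set `D = {x : |x| ≤ 1}`. -/
noncomputable def indD (x : ℝ) : ℝ :=
  Set.indicator {y : ℝ | |y| ≤ 1} (fun _ => (1 : ℝ)) x

/-- The Lévy–Khintchine characteristic exponent
`ψ(z) = −(1/2)Gz² + iβz + ∫ (e^{izy} − 1 − izy·1_D(y)) τ(dy)`. -/
noncomputable def levyExponent (G β : ℝ) (τ : Measure ℝ) (z : ℝ) : ℂ :=
  -(1 / 2 : ℂ) * (G : ℂ) * (z : ℂ) ^ 2 + Complex.I * (β : ℂ) * (z : ℂ) +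
    ∫ y, (Complex.exp (Complex.I * (z : ℂ) * (y : ℂ)) - 1 -
      Complex.I * (z : ℂ) * (y : ℂ) * (indD y : ℂ)) ∂τ

/-!
Integrating `ψ(z ρ(t - s))` over `s ∈ [0, t]`, the Gaussian and drift parts integrate termwise.
In the jump part, `e^{i z ρ y} - 1 - i z ρ y 1_D(y)` differs from the Lévy–Khintchine integrand at
the scaled jump `x = y ρ` only by the real drift `i z · y ρ (1_D(y ρ) - 1_D(y))`, which is where
the correction in `γ_{t,v₀}` comes from. All integrands are bounded, so Fubini applies, and
integrating a function of `y ρ(t - s)` against `τ ⊗ ds` is integrating it against the image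
measure `ν_t`.
-/

noncomputable def levyIntegrand (z x : ℝ) : ℂ :=
  Complex.exp (Complex.I * (z : ℂ) * (x : ℂ)) - 1 - Complex.I * (z : ℂ) * (x : ℂ) * (indD x : ℂ)

noncomputable def truncationShift (r y : ℝ) : ℝ :=
  y * r * (indD (y * r) - indD y)

lemma measurable_indD : Measurable indD :=
  measurable_const.indicator (isClosed_le continuous_abs continuous_const).measurableSet

lemma abs_mul_indD_le_one (x : ℝ) : |x * indD x| ≤ 1 := by
  by_cases h : |x| ≤ 1
  · simpa [indD, Set.indicator_of_mem (show x ∈ {y : ℝ | |y| ≤ 1} from h)] using h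
  · simp [indD, Set.indicator_of_notMem (show x ∉ {y : ℝ | |y| ≤ 1} from h)]

lemma levyExponent_eq (G β : ℝ) (τ : Measure ℝ) (z : ℝ) :
    levyExponent G β τ z = -(1 / 2 : ℂ) * (G : ℂ) * (z : ℂ) ^ 2 + Complex.I * (β : ℂ) * (z : ℂ) +
      ∫ y, levyIntegrand z y ∂τ :=
  rfl

lemma measurable_levyIntegrand (z : ℝ) : Measurable (levyIntegrand z) := by
  have harg : Measurable fun x : ℝ => Complex.I * (z : ℂ) * (x : ℂ) :=
    measurable_const.mul Complex.measurable_ofReal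
  exact ((Complex.measurable_exp.comp harg).sub measurable_const).sub
    (harg.mul (Complex.measurable_ofReal.comp measurable_indD))

lemma norm_levyIntegrand_le (z x : ℝ) : ‖levyIntegrand z x‖ ≤ 2 + |z| := by
  have hexp : ‖Complex.exp (Complex.I * (z : ℂ) * (x : ℂ))‖ = 1 := by
    rw [mul_assoc, ← Complex.ofReal_mul, Complex.norm_exp_I_mul_ofReal]
  have hcomp : ‖Complex.I * (z : ℂ) * (x : ℂ) * (indD x : ℂ)‖ ≤ |z| := by
    have h := abs_mul_indD_le_one x
    rw [norm_mul, norm_mul, norm_mul, Complex.norm_I, Complex.norm_real, Complex.norm_real,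
      Complex.norm_real, Real.norm_eq_abs, Real.norm_eq_abs, Real.norm_eq_abs, abs_mul] at *
    nlinarith [abs_nonneg z]
  calc ‖levyIntegrand z x‖
      ≤ ‖Complex.exp (Complex.I * (z : ℂ) * (x : ℂ))‖ + ‖(1 : ℂ)‖ +
          ‖Complex.I * (z : ℂ) * (x : ℂ) * (indD x : ℂ)‖ :=
        (norm_sub_le _ _).trans (add_le_add_left (norm_sub_le _ _) _)
    _ ≤ 2 + |z| := by rw [hexp, norm_one]; linarith

lemma integrable_levyIntegrand_comp {α : Type*} [MeasurableSpace α] {μ : Measure α}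
    [IsFiniteMeasure μ] (z : ℝ) {g : α → ℝ} (hg : Measurable g) :
    Integrable (fun a => levyIntegrand z (g a)) μ :=
  .of_bound ((measurable_levyIntegrand z).comp hg).aestronglyMeasurable (2 + |z|)
    (.of_forall fun _ => norm_levyIntegrand_le _ _)

lemma levyIntegrand_mul (z r y : ℝ) :
    levyIntegrand (z * r) y =
      levyIntegrand z (y * r) + Complex.I * (z : ℂ) * (truncationShift r y : ℂ) := by
  have hexp_arg :
      Complex.I * ((z * r : ℝ) : ℂ) * (y : ℂ) = Complex.I * (z : ℂ) * ((y * r : ℝ) : ℂ) := by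
    push_cast; ring
  simp only [levyIntegrand, truncationShift, hexp_arg]
  push_cast
  ring

lemma measurable_truncationShift : Measurable fun p : ℝ × ℝ => truncationShift p.1 p.2 := by
  have hprod : Measurable fun p : ℝ × ℝ => p.2 * p.1 := measurable_snd.mul measurable_fst
  exact hprod.mul ((measurable_indD.comp hprod).sub (measurable_indD.comp measurable_snd))

lemma abs_truncationShift_le (r y : ℝ) : |truncationShift r y| ≤ 1 + |r| := by
  have hsplit : truncationShift r y = y * r * indD (y * r) - y * indD y * r := by
    unfold truncationShift; ring
  have h₁ := abs_mul_indD_le_one (y * r)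
  have h₂ : |y * indD y * r| ≤ |r| := by
    rw [abs_mul]
    nlinarith [abs_mul_indD_le_one y, abs_nonneg r]
  rw [hsplit]
  exact (abs_sub _ _).trans (add_le_add h₁ h₂)

lemma levyExponent_mul (G β : ℝ) (τ : Measure ℝ) [IsFiniteMeasure τ] (z r : ℝ) :
    levyExponent G β τ (z * r) =
      -(1 / 2 : ℂ) * (G : ℂ) * (z : ℂ) ^ 2 * ((r ^ 2 : ℝ) : ℂ) +
        Complex.I * (β : ℂ) * (z : ℂ) * (r : ℂ) + ∫ y, levyIntegrand z (y * r) ∂τ +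
        Complex.I * (z : ℂ) * ((∫ y, truncationShift r y ∂τ : ℝ) : ℂ) := by
  have hshift : Integrable (fun y => truncationShift r y) τ :=
    .of_bound (measurable_truncationShift.comp measurable_prodMk_left).aestronglyMeasurable
      (1 + |r|) (.of_forall (abs_truncationShift_le r))
  rw [levyExponent_eq, integral_congr_ae (.of_forall (levyIntegrand_mul z r)),
    integral_add (integrable_levyIntegrand_comp z (measurable_mul_const r))
      (g := fun y => Complex.I * (z : ℂ) * (truncationShift r y : ℂ))
      (hshift.ofReal.const_mul _), integral_const_mul, integral_complex_ofReal]
  push_cast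
  ring

section ScaledJumps

variable {α : Type*} [MeasurableSpace α] (τ : Measure ℝ) [IsFiniteMeasure τ]
  (μ : Measure α) [IsFiniteMeasure μ] {f : α → ℝ}

lemma integral_integral_levyIntegrand_mul (z : ℝ) (hf : Measurable f) :
    ∫ s, ∫ y, levyIntegrand z (y * f s) ∂τ ∂μ =
      ∫ x, levyIntegrand z x ∂(τ.prod μ).map (fun p => p.1 * f p.2) := by
  have hjump : Measurable fun p : ℝ × α => p.1 * f p.2 :=
    measurable_fst.mul (hf.comp measurable_snd)
  rw [integral_map hjump.aemeasurable (measurable_levyIntegrand z).aestronglyMeasurable,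
    integral_prod _ (integrable_levyIntegrand_comp z hjump)]
  exact integral_integral_swap (integrable_levyIntegrand_comp z
    (measurable_snd.mul (hf.comp measurable_fst)))

theorem integral_levyExponent_mul (G β z : ℝ) (hf : Measurable f) {C : ℝ}
    (hC : ∀ s, |f s| ≤ C) :
    ∫ s, levyExponent G β τ (z * f s) ∂μ =
      -(1 / 2 : ℂ) * ((G * ∫ s, f s ^ 2 ∂μ : ℝ) : ℂ) * (z : ℂ) ^ 2 +
        Complex.I * ((β * (∫ s, f s ∂μ) + ∫ y, ∫ s, truncationShift (f s) y ∂μ ∂τ : ℝ) : ℂ) *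
          (z : ℂ) +
        ∫ x, levyIntegrand z x ∂(τ.prod μ).map (fun p => p.1 * f p.2) := by
  have hfC : ∀ s, ‖f s‖ ≤ C := hC
  have hf_int : Integrable f μ := .of_bound hf.aestronglyMeasurable C (.of_forall hfC)
  have hf2_int : Integrable (fun s => f s ^ 2) μ :=
    .of_bound (hf.pow_const 2).aestronglyMeasurable (C ^ 2) (.of_forall fun s => by
      rw [norm_pow]; exact pow_le_pow_left₀ (norm_nonneg _) (hfC s) 2)
  have hshift_meas : Measurable fun p : α × ℝ => truncationShift (f p.1) p.2 :=
    measurable_truncationShift.comp ((hf.comp measurable_fst).prodMk measurable_snd)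
  have hshift_le : ∀ p : α × ℝ, ‖truncationShift (f p.1) p.2‖ ≤ 1 + C := fun p =>
    (abs_truncationShift_le _ _).trans (by linarith [hC p.1])
  have hshift_int : Integrable (fun p : α × ℝ => truncationShift (f p.1) p.2) (μ.prod τ) :=
    .of_bound hshift_meas.aestronglyMeasurable (1 + C) (.of_forall hshift_le)
  have hjump_int : Integrable (fun s => ∫ y, levyIntegrand z (y * f s) ∂τ) μ :=
    (integrable_levyIntegrand_comp z
      (measurable_snd.mul (hf.comp measurable_fst))).integral_prod_left
  have hgauss_int :
      Integrable (fun s => -(1 / 2 : ℂ) * (G : ℂ) * (z : ℂ) ^ 2 * ((f s ^ 2 : ℝ) : ℂ)) μ :=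
    hf2_int.ofReal.const_mul _
  have hdrift_int : Integrable (fun s => Complex.I * (β : ℂ) * (z : ℂ) * (f s : ℂ)) μ :=
    hf_int.ofReal.const_mul _
  have hshift_int' : Integrable
      (fun s => Complex.I * (z : ℂ) * ((∫ y, truncationShift (f s) y ∂τ : ℝ) : ℂ)) μ :=
    hshift_int.integral_prod_left.ofReal.const_mul _
  simp_rw [levyExponent_mul]
  rw [integral_add, integral_add, integral_add, integral_const_mul, integral_const_mul,
    integral_const_mul, integral_complex_ofReal, integral_complex_ofReal, integral_complex_ofReal,
    integral_integral_levyIntegrand_mul τ μ z hf,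
    integral_integral_swap (f := fun s y => truncationShift (f s) y) hshift_int]
  · push_cast
    ring
  exacts [hgauss_int, hdrift_int, hgauss_int.add hdrift_int, hjump_int,
    (hgauss_int.add hdrift_int).add hjump_int, hshift_int']

end ScaledJumps

lemma intervalIntegral_comp_eq_setIntegral_Icc {E : Type*} [NormedAddCommGroup E]
    [NormedSpace ℝ E] {a b : ℝ} (hab : a ≤ b) {φ φ' : ℝ → ℝ} (h : Set.EqOn φ φ' (Set.Icc a b))
    (g : ℝ → E) :
    ∫ x in a..b, g (φ x) = ∫ x in Set.Icc a b, g (φ' x) := by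
  rw [intervalIntegral.integral_of_le hab, ← integral_Icc_eq_integral_Ioc]
  exact setIntegral_congr_fun measurableSet_Icc fun x hx => congrArg g (h hx)

lemma ContinuousOn.exists_bounded_continuous_extension_Icc {a b : ℝ} (hab : a ≤ b) {ρ : ℝ → ℝ}
    (hρ : ContinuousOn ρ (Set.Icc a b)) :
    ∃ ρ' : ℝ → ℝ, Continuous ρ' ∧ Set.EqOn ρ ρ' (Set.Icc a b) ∧ ∃ C, ∀ s, |ρ' s| ≤ C := by
  obtain ⟨C, hC⟩ := isCompact_Icc.exists_bound_of_continuousOn hρ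
  refine ⟨fun s => ρ (Set.projIcc a b hab s),
    hρ.comp_continuous (continuous_subtype_val.comp continuous_projIcc) fun s =>
      (Set.projIcc a b hab s).2, fun s hs => ?_, C, fun s => hC _ (Set.projIcc a b hab s).2⟩
  simp only [Set.projIcc_of_mem hab hs]

lemma eq_map_mul_of_forall_eq_lintegral {α : Type*} [MeasurableSpace α] {τ : Measure ℝ}
    {μ : Measure α} [SFinite μ] {f : α → ℝ} (hf : Measurable f) {ν : Measure ℝ}
    (hν : ∀ B : Set ℝ, MeasurableSet B →
      ν B = ∫⁻ y, ∫⁻ s, B.indicator (fun _ => (1 : ℝ≥0∞)) (y * f s) ∂μ ∂τ) :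
    ν = (τ.prod μ).map (fun p => p.1 * f p.2) := by
  ext B hB
  have hjump : Measurable fun p : ℝ × α => p.1 * f p.2 :=
    measurable_fst.mul (hf.comp measurable_snd)
  rw [hν B hB, Measure.map_apply hjump hB, Measure.prod_apply (hjump hB)]
  refine lintegral_congr fun y => ?_
  rw [lintegral_indicator_const_comp (hf.const_mul y) hB, one_mul]
  rfl

theorem stmt_8_general (G β v₀ t : ℝ) (ht : 0 < t)
    (τ : Measure ℝ) [IsFiniteMeasure τ]
    (ρ : ℝ → ℝ) (hρc : ContinuousOn ρ (Set.Icc 0 t))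
    (ν : Measure ℝ)
    (hν : ∀ B : Set ℝ, MeasurableSet B →
      ν B = ∫⁻ y, (∫⁻ s in Set.Icc (0:ℝ) t,
        B.indicator (fun _ => (1 : ℝ≥0∞)) (y * ρ (t - s))) ∂τ)
    (A γ : ℝ)
    (hA : A = G * ∫ s in (0:ℝ)..t, ρ (t - s) ^ 2)
    (hγ : γ = ρ t * v₀ + β * (∫ s in (0:ℝ)..t, ρ (t - s)) +
      ∫ y, (∫ s in (0:ℝ)..t,
        y * ρ (t - s) * (indD (y * ρ (t - s)) - indD y)) ∂τ) :
    ∀ z : ℝ,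
      Complex.I * (z : ℂ) * (ρ t : ℂ) * (v₀ : ℂ) +
          (∫ s in (0:ℝ)..t, levyExponent G β τ (z * ρ (t - s))) =
        -(1 / 2 : ℂ) * (A : ℂ) * (z : ℂ) ^ 2 + Complex.I * (γ : ℂ) * (z : ℂ) +
          ∫ x, (Complex.exp (Complex.I * (z : ℂ) * (x : ℂ)) - 1 -
            Complex.I * (z : ℂ) * (x : ℂ) * (indD x : ℂ)) ∂ν := by
  intro z
  obtain ⟨ρ', hρ'_cont, hρ'_eq, C, hC⟩ := hρc.exists_bounded_continuous_extension_Icc ht.le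
  have hρ'_eqOn : Set.EqOn (fun s => ρ (t - s)) (fun s => ρ' (t - s)) (Set.Icc 0 t) :=
    fun s hs => hρ'_eq ⟨by linarith [hs.2], by linarith [hs.1]⟩
  have hf_meas : Measurable fun s => ρ' (t - s) :=
    (hρ'_cont.comp (continuous_const.sub continuous_id)).measurable
  have hν_map :
      ν = (τ.prod (volume.restrict (Set.Icc 0 t))).map (fun p => p.1 * ρ' (t - p.2)) := by
    refine eq_map_mul_of_forall_eq_lintegral hf_meas fun B hB => ?_
    rw [hν B hB]
    exact lintegral_congr fun y => setLIntegral_congr_fun measurableSet_Icc fun s hs => by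
      simp only [show ρ (t - s) = ρ' (t - s) from hρ'_eqOn hs]
  have hshift : ∀ y, ∫ s in (0:ℝ)..t, y * ρ (t - s) * (indD (y * ρ (t - s)) - indD y) =
      ∫ s in Set.Icc 0 t, truncationShift (ρ' (t - s)) y := fun y =>
    intervalIntegral_comp_eq_setIntegral_Icc ht.le hρ'_eqOn (fun r => truncationShift r y)
  simp only [hshift] at hγ
  rw [hA, hγ, intervalIntegral_comp_eq_setIntegral_Icc ht.le hρ'_eqOn (fun r => r ^ 2),
    intervalIntegral_comp_eq_setIntegral_Icc ht.le hρ'_eqOn (fun r => r),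
    intervalIntegral_comp_eq_setIntegral_Icc ht.le hρ'_eqOn (fun r => levyExponent G β τ (z * r)),
    integral_levyExponent_mul τ _ G β z hf_meas fun s => hC (t - s), ← hν_map]
  simp only [levyIntegrand]
  push_cast
  ring

/-- Analytic core of Theorem 3.2: the exponent of the characteristic function of
`V(t)` rewrites in Lévy–Khintchine form with triplet `(A_t, γ_{t,v₀}, ν_t)`. -/
theorem stmt_8 (G β v₀ t : ℝ) (hG : 0 ≤ G) (ht : 0 < t)
    (τ : Measure ℝ) [IsFiniteMeasure τ] (hτ0 : τ {0} = 0)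
    (ρ : ℝ → ℝ) (hρc : ContinuousOn ρ (Set.Icc 0 t))
    (hρne : ∀ s ∈ Set.Icc (0:ℝ) t, ρ s ≠ 0)
    (ν : Measure ℝ)
    (hν : ∀ B : Set ℝ, MeasurableSet B →
      ν B = ∫⁻ y, (∫⁻ s in Set.Icc (0:ℝ) t,
        B.indicator (fun _ => (1 : ℝ≥0∞)) (y * ρ (t - s))) ∂τ)
    (A γ : ℝ)
    (hA : A = G * ∫ s in (0:ℝ)..t, ρ (t - s) ^ 2)
    (hγ : γ = ρ t * v₀ + β * (∫ s in (0:ℝ)..t, ρ (t - s)) +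
      ∫ y, (∫ s in (0:ℝ)..t,
        y * ρ (t - s) * (indD (y * ρ (t - s)) - indD y)) ∂τ) :
    ∀ z : ℝ,
      Complex.I * (z : ℂ) * (ρ t : ℂ) * (v₀ : ℂ) +
          (∫ s in (0:ℝ)..t, levyExponent G β τ (z * ρ (t - s))) =
        -(1 / 2 : ℂ) * (A : ℂ) * (z : ℂ) ^ 2 + Complex.I * (γ : ℂ) * (z : ℂ) +
          ∫ x, (Complex.exp (Complex.I * (z : ℂ) * (x : ℂ)) - 1 -
            Complex.I * (z : ℂ) * (x : ℂ) * (indD x : ℂ)) ∂ν :=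
  stmt_8_general G β v₀ t ht τ ρ hρc ν hν A γ hA hγ
end
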